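/- arXiv:1301.7465 — 4 statements merged into one kernel-verified Lean document; each statement's English description precedes it below -/
import Mathlib

section
/- Starting from any capital x > 0 with positive fractional part, repeatedly applying the winning step x ↦ x + (1/2){x} eventually increases the capital by at least 1: there exists n such that after n winning steps the capital exceeds x + 1, provided {x} > 0. Equivalently, the sequence x_{t+1} = x_t + (1/2){x_t} with x_0 = x and {x} > 0 satisfies x_t → ∞. -/
/-!
Writing `y = ⌊y⌋ + {y}`, one winning step sends `y` to `⌊y⌋ + (3/2){y}`. So as long as the
fractional part stays below `2/3` it is multiplied by `3/2`, and since it is positive (the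
iterates stay irrational) it must reach `2/3` after finitely many steps; the step taken from
there gains at least `1/3`. The capital is nondecreasing, so it gains `1/3` infinitely often.
-/

open Filter

lemma add_half_fract_eq (y : ℝ) : y + 1 / 2 * Int.fract y = ⌊y⌋ + 3 / 2 * Int.fract y := by
  rw [Int.fract]
  ring

lemma Irrational.add_half_fract {y : ℝ} (hy : Irrational y) :
    Irrational (y + 1 / 2 * Int.fract y) := by
  rw [add_half_fract_eq, Int.fract]
  have h := ((hy.sub_intCast ⌊y⌋).ratCast_mul (q := 3 / 2) (by norm_num)).intCast_add ⌊y⌋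
  push_cast at h
  exact h

lemma fract_add_half_fract_of_lt {y : ℝ} (hy : Int.fract y < 2 / 3) :
    Int.fract (y + 1 / 2 * Int.fract y) = 3 / 2 * Int.fract y := by
  rw [add_half_fract_eq, Int.fract_intCast_add, Int.fract_eq_self]
  constructor <;> linarith [Int.fract_nonneg y]

section WinningSteps

variable {f : ℕ → ℝ} (hf : ∀ t, f (t + 1) = f t + 1 / 2 * Int.fract (f t))
include hf

lemma irrational_of_winningSteps (h0 : Irrational (f 0)) (t : ℕ) : Irrational (f t) := by
  induction t with
  | zero => exact h0
  | succ t ih => rw [hf]; exact ih.add_half_fract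

lemma monotone_of_winningSteps : Monotone f :=
  monotone_nat_of_le_succ fun t => by rw [hf]; linarith [Int.fract_nonneg (f t)]

lemma fract_eq_pow_mul_of_winningSteps {t n : ℕ}
    (hsmall : ∀ k < n, Int.fract (f (t + k)) < 2 / 3) :
    Int.fract (f (t + n)) = (3 / 2) ^ n * Int.fract (f t) := by
  induction n with
  | zero => simp
  | succ n ih =>
    rw [← add_assoc, hf, fract_add_half_fract_of_lt (hsmall n n.lt_succ_self),
      ih fun k hk => hsmall k (hk.trans n.lt_succ_self), pow_succ]
    ring

lemma exists_two_thirds_le_fract_of_winningSteps {t : ℕ} (hpos : 0 < Int.fract (f t)) :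
    ∃ s, t ≤ s ∧ 2 / 3 ≤ Int.fract (f s) := by
  by_contra! hsmall
  obtain ⟨n, hn⟩ := pow_unbounded_of_one_lt (Int.fract (f t))⁻¹ (by norm_num : (1 : ℝ) < 3 / 2)
  have hfract : Int.fract (f (t + n)) = (3 / 2) ^ n * Int.fract (f t) :=
    fract_eq_pow_mul_of_winningSteps hf fun k _ => hsmall (t + k) (Nat.le_add_right t k)
  have hone : 1 < (3 / 2 : ℝ) ^ n * Int.fract (f t) := by
    rwa [inv_lt_iff_one_lt_mul₀ hpos] at hn
  linarith [Int.fract_lt_one (f (t + n))]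

lemma exists_add_third_le_of_winningSteps (hpos : ∀ t, 0 < Int.fract (f t)) (t : ℕ) :
    ∃ s, f t + 1 / 3 ≤ f s := by
  obtain ⟨s, hts, hs⟩ := exists_two_thirds_le_fract_of_winningSteps hf (hpos t)
  refine ⟨s + 1, ?_⟩
  rw [hf]
  linarith [monotone_of_winningSteps hf hts]

lemma tendsto_atTop_of_winningSteps (hpos : ∀ t, 0 < Int.fract (f t)) :
    Tendsto f atTop atTop := by
  have hgrow : ∀ n : ℕ, ∃ t, f 0 + n / 3 ≤ f t := by
    intro n
    induction n with
    | zero => exact ⟨0, by simp⟩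
    | succ n ih =>
      obtain ⟨t, ht⟩ := ih
      obtain ⟨s, hs⟩ := exists_add_third_le_of_winningSteps hf hpos t
      exact ⟨s, by push_cast; linarith⟩
  refine tendsto_atTop_atTop_of_monotone (monotone_of_winningSteps hf) fun b => ?_
  obtain ⟨t, ht⟩ := hgrow ⌈3 * (b - f 0)⌉₊
  exact ⟨t, by linarith [Nat.le_ceil (3 * (b - f 0))]⟩

end WinningSteps

theorem stmt7_general (x : ℝ) (hirr : Irrational x)
    (f : ℕ → ℝ) (hf0 : f 0 = x)
    (hf : ∀ t, f (t + 1) = f t + (1/2 : ℝ) * Int.fract (f t)) :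
    (∃ n, x + 1 < f n) ∧ Tendsto f atTop atTop := by
  have hpos : ∀ t, 0 < Int.fract (f t) := fun t =>
    Int.fract_pos.2 ((irrational_of_winningSteps hf (hf0 ▸ hirr) t).ne_int _)
  have hlim := tendsto_atTop_of_winningSteps hf hpos
  exact ⟨(hlim.eventually_gt_atTop (x + 1)).exists, hlim⟩

/-- Starting from an irrational capital x > 0 (so all fractional parts along the way are
positive), repeatedly winning the bet of half the fractional part drives the capital to
infinity; in particular it eventually exceeds x + 1. -/
theorem stmt7 (x : ℝ) (hx : 0 < x) (hirr : Irrational x)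
    (f : ℕ → ℝ) (hf0 : f 0 = x)
    (hf : ∀ t, f (t + 1) = f t + (1/2 : ℝ) * Int.fract (f t)) :
    (∃ n, x + 1 < f n) ∧ Tendsto f atTop atTop :=
  stmt7_general x hirr f hf0 hf
end

section
/- For the history-independent V-martingale M with initial capital 2 and increments M'(σ) = 1 + 1/(|σ|+1) (betting always on +1), define K(σ) as the maximal number k of consecutive losses M can survive from position σ: K(σ) = max{k : k + H(n+k) − H(n) ≤ M(σ)} where n = |σ| and H is the harmonic sum. Then for every σ with M(σ) ≥ 2, after one win K strictly increases in the limit: since the harmonic series diverges, for every bound B there is no infinite play in which K(x↾n) stays bounded by B while x_n = +1 for all large n. -/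
open Filter

/-- The n-th harmonic sum H(n) = Σ_{k=1}^n 1/k. -/
noncomputable def harm (n : ℕ) : ℝ := ∑ k ∈ Finset.range n, 1 / ((k : ℝ) + 1)

lemma harm_succ (m : ℕ) : harm (m + 1) = harm m + 1 / ((m : ℝ) + 1) := by
  simp [harm, Finset.sum_range_succ]

lemma harm_mono {a b : ℕ} (h : a ≤ b) : harm a ≤ harm b := by
  induction b with
  | zero => simpa [Nat.le_zero.1 h]
  | succ b ih =>
    rcases Nat.lt_or_ge a (b+1) with h' | h'
    · have := ih (Nat.lt_succ_iff.1 h')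
      rw [harm_succ]
      have : (0:ℝ) ≤ 1 / ((b:ℝ)+1) := by positivity
      linarith [ih (Nat.lt_succ_iff.1 h')]
    · have : a = b + 1 := le_antisymm h h'
      simp [this]

lemma harm_add_le (n k : ℕ) : harm (n + k) - harm n ≤ k := by
  induction k with
  | zero => simp
  | succ k ih =>
    rw [← Nat.add_assoc, harm_succ]
    have h2 : 1 / (((n + k : ℕ) : ℝ) + 1) ≤ 1 := by
      push_cast
      have h0 : (0:ℝ) ≤ (n:ℝ) + k := by positivity
      apply div_le_one_of_le₀ <;> linarith
    push_cast at h2 ⊢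
    linarith

/-- For the history-independent V-martingale with initial capital 2 betting 1 + 1/n on +1
at step n, the number K(x↾n) of consecutive losses it can survive tends to infinity along
any play that is eventually all wins (+1): K cannot stay bounded while x_n = +1 for all
large n, since the harmonic series diverges. -/
theorem stmt10 (x : ℕ → Bool) (cap : ℕ → ℝ)
    (h0 : cap 0 = 2)
    (hrec : ∀ n, cap (n + 1) =
      cap n + (if x n then (1:ℝ) else -1) * (1 + 1 / ((n : ℝ) + 1)))
    (K : ℕ → ℕ)
    (hK : ∀ n, K n = sSup {k : ℕ | (k : ℝ) + (harm (n + k) - harm n) ≤ cap n})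
    (n₀ : ℕ) (hx : ∀ n ≥ n₀, x n = true) :
    Tendsto K atTop atTop := by
  -- cap grows at least linearly after n₀
  have hgrow : ∀ n ≥ n₀, cap n₀ + ((n : ℝ) - n₀) ≤ cap n := by
    intro n hn
    induction n with
    | zero => simp_all
    | succ n ih =>
      rcases Nat.lt_or_ge n₀ (n+1) with h' | h'
      · have hn' : n₀ ≤ n := Nat.lt_succ_iff.1 h'
        have := ih hn'
        rw [hrec n, hx n hn']
        simp only [if_pos rfl]
        have hpos : (0:ℝ) ≤ 1 / ((n:ℝ)+1) := by positivity
        push_cast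
        linarith
      · have : n₀ = n + 1 := le_antisymm hn h'
        simp [this]
  refine tendsto_atTop.2 fun b => ?_
  filter_upwards [eventually_ge_atTop (n₀ + ⌈2 * (b:ℝ) - cap n₀⌉₊)] with n hn
  have hn0 : n₀ ≤ n := le_trans (Nat.le_add_right _ _) hn
  have hcap : 2 * (b:ℝ) ≤ cap n := by
    have h1 := hgrow n hn0
    have h2 : (⌈2 * (b:ℝ) - cap n₀⌉₊ : ℝ) ≤ (n:ℝ) - n₀ := by
      have h := (Nat.cast_le (α := ℝ)).2 hn
      push_cast at h
      linarith
    have h3 := Nat.le_ceil (2 * (b:ℝ) - cap n₀)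
    linarith
  rw [hK n]
  apply le_csSup
  · refine ⟨⌈cap n⌉₊, fun k hk => ?_⟩
    have hh : harm n ≤ harm (n + k) := harm_mono (Nat.le_add_right _ _)
    have : (k:ℝ) ≤ cap n := by
      have := Set.mem_setOf_eq ▸ hk
      linarith
    exact_mod_cast le_trans this (Nat.le_ceil _)
  · show (b:ℝ) + (harm (n + b) - harm n) ≤ cap n
    have := harm_add_le n b
    linarith
end

section
/- There exists a computable history-independent martingale with increments {1/n} (betting 1/n at step n, always on +1, with suitable initial capital) that separates (ℝ, ∞-gains) from (V, ∞-gains): for any countable set of nonnegative V-supermartingales {S_j}, there exists a binary sequence x on which this martingale tends to infinity without going bankrupt, while limsup_n S_j(x↾n) < ∞ for every j. -/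
open Filter

noncomputable section

/-- The length-`n` prefix of an infinite binary sequence (`true` = +1, `false` = -1). -/
def pre (x : ℕ → Bool) (n : ℕ) : List Bool := (List.range n).map x

/-- The increment (wager) of `M` at `σ`: `M'(σ) = (M(σ,+1) - M(σ,-1))/2`. -/
def inc (M : List Bool → ℝ) (σ : List Bool) : ℝ :=
  (M (σ ++ [true]) - M (σ ++ [false])) / 2

/-- The marginal consumption of `M` at `σ`. -/
def marginal (M : List Bool → ℝ) (σ : List Bool) : ℝ :=
  M σ - (M (σ ++ [false]) + M (σ ++ [true])) / 2

def IsSupermartingale (M : List Bool → ℝ) : Prop :=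
  ∀ σ, (M (σ ++ [false]) + M (σ ++ [true])) / 2 ≤ M σ

def IsMartingale (M : List Bool → ℝ) : Prop :=
  ∀ σ, M σ = (M (σ ++ [false]) + M (σ ++ [true])) / 2

/-- The proper cover of `M`: the martingale with the same initial capital and increments. -/
def cover (M : List Bool → ℝ) (σ : List Bool) : ℝ :=
  M [] + ∑ k ∈ Finset.range σ.length,
    (if σ.getD k false then inc M (σ.take k) else - inc M (σ.take k))

/-- `M` goes bankrupt at `σ`. -/
def Bankrupts (M : List Bool → ℝ) (σ : List Bool) : Prop :=
  M σ - |inc M σ| < marginal M σ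

/-- `M` goes bankrupt on `x`. -/
def BankruptOn (M : List Bool → ℝ) (x : ℕ → Bool) : Prop :=
  ∃ n, Bankrupts M (pre x n)

/-- `M` achieves ∞-gains on `x`. -/
def AchievesGains (M : List Bool → ℝ) (x : ℕ → Bool) : Prop :=
  ¬ BankruptOn M x ∧ Tendsto (fun n => M (pre x n)) atTop atTop

/-- `M` achieves ∞-consumption on `x`. -/
def AchievesConsumption (M : List Bool → ℝ) (x : ℕ → Bool) : Prop :=
  ¬ BankruptOn M x ∧ Tendsto (fun n => cover M (pre x n) - M (pre x n)) atTop atTop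

/-- `M` achieves oscillation on `x`. -/
def AchievesOscillation (M : List Bool → ℝ) (x : ℕ → Bool) : Prop :=
  ¬ BankruptOn M x ∧
    liminf (fun n => ((cover M (pre x n) : ℝ) : EReal)) atTop ≠
      limsup (fun n => ((cover M (pre x n) : ℝ) : EReal)) atTop

/-- An `A`-(super)martingale: all wagers lie in `A`. -/
def WagersIn (M : List Bool → ℝ) (A : Set ℝ) : Prop := ∀ σ, inc M σ ∈ A

/-- History independence: the wager depends only on the length of the history. -/
def HistoryIndependent (M : List Bool → ℝ) : Prop :=
  ∀ σ τ : List Bool, σ.length = τ.length → inc M σ = inc M τ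

/-- The wager set `V = {a : |a| ≥ 1} ∪ {0}`. -/
def Vset : Set ℝ := {a : ℝ | 1 ≤ |a|} ∪ {0}

/-!
The separating martingale is `5 + ∑ ±1/(k+1)`: it wagers `1/(n+1)` on `true` at time `n`.
Switch the `j`-th supermartingale `Sⱼ` on at a time `mⱼ`, and call a node contested if some
switched-on `Sⱼ` bets there. Under the law that tosses a fair coin at contested nodes and moves
to `true` elsewhere, every switched-on `Sⱼ` is still a supermartingale; so is
`#bets of Sⱼ + Sⱼ (4λⱼ - Sⱼ)` while `Sⱼ ≤ λⱼ`, since a bet of size at least one raises the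
quadratic variation by at least one; and so is `W² + 2/(n+1)`, where `W` is the part of the
separating martingale collected at contested nodes. A weighted sum `Φ` of these, with
`Φ(∅) < 1`, is then a supermartingale, so there is a path along which `Φ` never increases. On it
every `Sⱼ` stays below `λⱼ` and bets at most `Tⱼ` times after `mⱼ`, and `|W| < 4`. The times `mⱼ`
grow so fast that the harmonic sum over the uncontested steps, where the martingale gains
`1/(n+1)` outright, still diverges.
-/

namespace HarmonicSeparation

open Finset
open scoped Classical

@[simp] lemma length_pre (x : ℕ → Bool) (n : ℕ) : (pre x n).length = n := by
  simp [pre]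

lemma pre_succ (x : ℕ → Bool) (n : ℕ) : pre x (n + 1) = pre x n ++ [x n] := by
  simp [pre, List.range_succ]

def prefixSum (g : List Bool → Bool → ℝ) (σ : List Bool) : ℝ :=
  ∑ k ∈ range σ.length, g (σ.take k) (σ.getD k false)

@[simp] lemma prefixSum_nil (g : List Bool → Bool → ℝ) : prefixSum g [] = 0 := by
  simp [prefixSum]

lemma prefixSum_concat (g : List Bool → Bool → ℝ) (σ : List Bool) (b : Bool) :
    prefixSum g (σ ++ [b]) = prefixSum g σ + g σ b := by
  rw [prefixSum, List.length_append, List.length_singleton, sum_range_succ, List.take_left,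
    List.getD_append_right _ _ _ _ le_rfl, Nat.sub_self]
  congr 1
  refine sum_congr rfl fun k hk => ?_
  have hk := mem_range.mp hk
  rw [List.take_append_of_le_length hk.le, List.getD_append _ _ _ _ hk]

lemma prefixSum_pre (g : List Bool → Bool → ℝ) (x : ℕ → Bool) (n : ℕ) :
    prefixSum g (pre x n) = ∑ k ∈ range n, g (pre x k) (x k) := by
  induction n with
  | zero => simp [pre]
  | succ n ih => rw [pre_succ, prefixSum_concat, ih, sum_range_succ]

lemma prefixSum_eq_zero_of_length_le {g : List Bool → Bool → ℝ} {m : ℕ}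
    (hg : ∀ τ b, τ.length < m → g τ b = 0) {σ : List Bool} (hσ : σ.length ≤ m) :
    prefixSum g σ = 0 :=
  sum_eq_zero fun k hk => hg _ _ (by simp only [List.length_take]; have := mem_range.mp hk; omega)

lemma exists_path {P : List Bool → Prop} {R : List Bool → Bool → Prop} (h0 : P [])
    (hstep : ∀ σ, P σ → ∃ b, R σ b ∧ P (σ ++ [b])) :
    ∃ x : ℕ → Bool, ∀ n, P (pre x n) ∧ R (pre x n) (x n) := by
  choose next hnext using hstep
  let path : ℕ → {σ // P σ} :=
    fun n => Nat.rec ⟨[], h0⟩ (fun _ σ => ⟨σ.1 ++ [next σ.1 σ.2], (hnext σ.1 σ.2).2⟩) n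
  let x n := next (path n).1 (path n).2
  have hpre : ∀ n, pre x n = (path n).1 := by
    intro n
    induction n with
    | zero => rfl
    | succ n ih => rw [pre_succ, ih]
  exact ⟨x, fun n => hpre n ▸ ⟨(path n).2, (hnext _ (path n).2).1⟩⟩

def nextMean (c : List Bool → Prop) (f : List Bool → ℝ) (σ : List Bool) : ℝ :=
  if c σ then (f (σ ++ [false]) + f (σ ++ [true])) / 2 else f (σ ++ [true])

section NextMean

variable {c : List Bool → Prop} {σ : List Bool}

lemma nextMean_mono {f g : List Bool → ℝ} (h : ∀ b, f (σ ++ [b]) ≤ g (σ ++ [b])) :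
    nextMean c f σ ≤ nextMean c g σ := by
  unfold nextMean
  split_ifs
  · linarith [h false, h true]
  · exact h true

lemma nextMean_le_of_forall_le {f : List Bool → ℝ} {a : ℝ} (h : ∀ b, f (σ ++ [b]) ≤ a) :
    nextMean c f σ ≤ a := by
  unfold nextMean
  split_ifs
  · linarith [h false, h true]
  · exact h true

lemma nextMean_add (f g : List Bool → ℝ) :
    nextMean c (fun τ => f τ + g τ) σ = nextMean c f σ + nextMean c g σ := by
  unfold nextMean
  split_ifs <;> ring

lemma nextMean_div_const (f : List Bool → ℝ) (a : ℝ) :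
    nextMean c (fun τ => f τ / a) σ = nextMean c f σ / a := by
  unfold nextMean
  split_ifs <;> ring

lemma nextMean_tsum_le {f : ℕ → List Bool → ℝ} (hf : ∀ τ, Summable fun j => f j τ)
    (h : ∀ j, nextMean c (f j) σ ≤ f j σ) :
    nextMean c (fun τ => ∑' j, f j τ) σ ≤ ∑' j, f j σ := by
  have hsum : Summable fun j => nextMean c (f j) σ := by
    unfold nextMean
    split_ifs
    · exact ((hf _).add (hf _)).div_const 2
    · exact hf _
  calc nextMean c (fun τ => ∑' j, f j τ) σ = ∑' j, nextMean c (f j) σ := by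
        unfold nextMean
        split_ifs
        · rw [← Summable.tsum_add (hf _) (hf _), tsum_div_const]
        · rfl
    _ ≤ ∑' j, f j σ := Summable.tsum_le_tsum h hsum (hf σ)

lemma exists_child_le_of_nextMean_le {f : List Bool → ℝ} (h : nextMean c f σ ≤ f σ) :
    ∃ b, (¬ c σ → b = true) ∧ f (σ ++ [b]) ≤ f σ := by
  unfold nextMean at h
  split_ifs at h with hc
  · by_cases hfalse : f (σ ++ [false]) ≤ f σ
    · exact ⟨false, fun h => absurd hc h, hfalse⟩
    · exact ⟨true, fun h => absurd hc h, by linarith⟩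
  · exact ⟨true, fun _ => rfl, h⟩

end NextMean

section Supermartingale

variable {F : List Bool → ℝ} {σ : List Bool}

lemma apply_concat_true (F : List Bool → ℝ) (σ : List Bool) :
    F (σ ++ [true]) = F σ - marginal F σ + inc F σ := by
  simp only [marginal, inc]; ring

lemma apply_concat_false (F : List Bool → ℝ) (σ : List Bool) :
    F (σ ++ [false]) = F σ - marginal F σ - inc F σ := by
  simp only [marginal, inc]; ring

lemma IsSupermartingale.marginal_nonneg (hF : IsSupermartingale F) (σ : List Bool) :
    0 ≤ marginal F σ := by
  have := hF σ
  unfold marginal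
  linarith

lemma IsSupermartingale.apply_concat_le_two_mul (hF : IsSupermartingale F)
    (hpos : ∀ τ, 0 ≤ F τ) (σ : List Bool) (b : Bool) : F (σ ++ [b]) ≤ 2 * F σ := by
  have := hF σ
  cases b <;> linarith [hpos (σ ++ [false]), hpos (σ ++ [true])]

lemma IsSupermartingale.le_two_pow_mul (hF : IsSupermartingale F) (hpos : ∀ τ, 0 ≤ F τ)
    (σ : List Bool) : F σ ≤ 2 ^ σ.length * F [] := by
  induction σ using List.reverseRecOn with
  | nil => simp
  | append_singleton τ b ih =>
    rw [List.length_append, List.length_singleton, pow_succ]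
    linarith [IsSupermartingale.apply_concat_le_two_mul hF hpos τ b]

lemma one_le_abs_inc_of_wagersIn (hF : WagersIn F Vset) (h : inc F σ ≠ 0) : 1 ≤ |inc F σ| := by
  rcases hF σ with h1 | h0
  · exact h1
  · exact absurd h0 h

lemma IsSupermartingale.nextMean_le (hF : IsSupermartingale F) {c : List Bool → Prop}
    (hbet : ¬ c σ → inc F σ = 0) : nextMean c F σ ≤ F σ := by
  unfold nextMean
  split_ifs with hc
  · exact hF σ
  · rw [apply_concat_true F σ, hbet hc]
    linarith [IsSupermartingale.marginal_nonneg hF σ]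

end Supermartingale

section Tracker

variable {F : List Bool → ℝ} {m : ℕ} {lam T : ℝ} {σ : List Bool}

def betCount (F : List Bool → ℝ) (m : ℕ) : List Bool → ℝ :=
  prefixSum fun τ _ => if m ≤ τ.length ∧ inc F τ ≠ 0 then 1 else 0

lemma betCount_nonneg (F : List Bool → ℝ) (m : ℕ) (σ : List Bool) : 0 ≤ betCount F m σ := by
  unfold betCount prefixSum
  exact sum_nonneg fun _ _ => by beta_reduce; split_ifs <;> norm_num

lemma betCount_of_length_le (h : σ.length ≤ m) : betCount F m σ = 0 :=
  prefixSum_eq_zero_of_length_le (fun τ _ hτ => if_neg fun h => absurd h.1 (by omega)) h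

def betPotential (F : List Bool → ℝ) (m : ℕ) (lam T : ℝ) (σ : List Bool) : ℝ :=
  F σ / lam + (betCount F m σ + F σ * (4 * lam - F σ)) / T

/-- At a bet `a` the mean of `F (4λ - F)` drops by `a² ≥ 1`, and consumption does not raise it
while `F ≤ 2λ`. -/
lemma nextMean_betCount_add_le {c : List Bool → Prop} (hF : IsSupermartingale F)
    (hV : inc F σ ≠ 0 → 1 ≤ |inc F σ|) (hm : m ≤ σ.length) (hσ : F σ ≤ 2 * lam)
    (hbet : ¬ c σ → inc F σ = 0) :
    nextMean c (fun τ => betCount F m τ + F τ * (4 * lam - F τ)) σ ≤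
      betCount F m σ + F σ * (4 * lam - F σ) := by
  have ht := apply_concat_true F σ
  have hf := apply_concat_false F σ
  set a := inc F σ
  set μ := marginal F σ
  set I : ℝ := if a ≠ 0 then 1 else 0
  have hμ : 0 ≤ μ := IsSupermartingale.marginal_nonneg hF σ
  have hcount : ∀ b, betCount F m (σ ++ [b]) = betCount F m σ + I := by
    intro b
    simp only [betCount, prefixSum_concat, hm, true_and, a, I]
  have hI : I ≤ a ^ 2 := by
    by_cases ha : a = 0
    · simp [I, ha]
    · simp only [I, if_pos ha]
      nlinarith [hV ha, sq_abs a]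
  have hconsume : (F σ - μ) * (4 * lam - (F σ - μ)) ≤ F σ * (4 * lam - F σ) := by
    nlinarith [mul_nonneg hμ (by linarith : 0 ≤ 4 * lam - 2 * F σ + μ)]
  by_cases hc : c σ
  · simp only [nextMean, if_pos hc, hcount, ht, hf]
    nlinarith
  · have ha : a = 0 := hbet hc
    simp only [nextMean, if_neg hc, hcount, ht, ha, I]
    simpa using hconsume

lemma nextMean_betPotential_le {c : List Bool → Prop} (hF : IsSupermartingale F)
    (hV : inc F σ ≠ 0 → 1 ≤ |inc F σ|) (hm : m ≤ σ.length) (hσ : F σ ≤ 2 * lam)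
    (hlam : 0 < lam) (hT : 0 < T) (hbet : ¬ c σ → inc F σ = 0) :
    nextMean c (betPotential F m lam T) σ ≤ betPotential F m lam T σ := by
  unfold betPotential
  rw [nextMean_add, nextMean_div_const, nextMean_div_const]
  gcongr
  · exact IsSupermartingale.nextMean_le hF hbet
  · exact nextMean_betCount_add_le hF hV hm hσ hbet

lemma betCount_add_nonneg (h0 : 0 ≤ F σ) (h : F σ ≤ 4 * lam) :
    0 ≤ betCount F m σ + F σ * (4 * lam - F σ) :=
  add_nonneg (betCount_nonneg F m σ) (mul_nonneg h0 (by linarith))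

lemma div_le_betPotential (h0 : 0 ≤ F σ) (h : F σ ≤ 4 * lam) (hT : 0 < T) :
    F σ / lam ≤ betPotential F m lam T σ :=
  le_add_of_nonneg_right (div_nonneg (betCount_add_nonneg h0 h) hT.le)

lemma betCount_div_le_betPotential (h0 : 0 ≤ F σ) (h : F σ ≤ 4 * lam) (hlam : 0 < lam)
    (hT : 0 < T) :
    betCount F m σ / T ≤ betPotential F m lam T σ := by
  have hψ : 0 ≤ F σ * (4 * lam - F σ) := mul_nonneg h0 (by linarith)
  exact (div_le_div_of_nonneg_right (le_add_of_nonneg_right hψ) hT.le).trans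
    (le_add_of_nonneg_left (div_nonneg h0 hlam.le))

end Tracker

section Walk

def outcome (b : Bool) : ℝ := if b then 1 else -1

variable {c : List Bool → Prop} {σ : List Bool}

def walk (c : List Bool → Prop) : List Bool → ℝ :=
  prefixSum fun τ b => if c τ then outcome b / (τ.length + 1) else 0

/-- The walk moves by `±1/(n+1)` at step `n`; `2/(n+1)` dominates the remaining variance
`∑_{k ≥ n} 1/(k+1)²`. -/
def walkEnergy (c : List Bool → Prop) (σ : List Bool) : ℝ :=
  walk c σ ^ 2 + 2 / (σ.length + 1)

@[simp] lemma walkEnergy_nil : walkEnergy c [] = 2 := by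
  simp [walkEnergy, walk]

lemma walkEnergy_nonneg (c : List Bool → Prop) (σ : List Bool) : 0 ≤ walkEnergy c σ := by
  unfold walkEnergy
  positivity

lemma nextMean_walkEnergy_le : nextMean c (walkEnergy c) σ ≤ walkEnergy c σ := by
  have hchild : ∀ b, walkEnergy c (σ ++ [b]) =
      (walk c σ + if c σ then outcome b / (σ.length + 1) else 0) ^ 2 + 2 / (σ.length + 2) := by
    intro b
    simp only [walkEnergy, walk, prefixSum_concat, List.length_append, List.length_singleton]
    push_cast
    ring
  have hn : (0 : ℝ) < σ.length + 1 := by positivity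
  have hvar : 1 / ((σ.length : ℝ) + 1) ^ 2 + 2 / (σ.length + 2) ≤ 2 / (σ.length + 1) := by
    rw [div_add_div _ _ (by positivity) (by positivity), div_le_div_iff₀ (by positivity) hn]
    nlinarith
  have hdrift : 2 / ((σ.length : ℝ) + 2) ≤ 2 / (σ.length + 1) := by
    gcongr
    linarith
  by_cases hc : c σ
  · simp only [nextMean, if_pos hc, hchild, outcome, Bool.false_eq_true, if_false, if_true]
    have : ((walk c σ + -1 / (σ.length + 1)) ^ 2 + (walk c σ + 1 / (σ.length + 1)) ^ 2) / 2 =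
        walk c σ ^ 2 + 1 / ((σ.length : ℝ) + 1) ^ 2 := by
      field_simp
      ring
    rw [walkEnergy]
    linarith
  · simp only [nextMean, if_neg hc, hchild, add_zero]
    rw [walkEnergy]
    linarith

end Walk

/-- The paper's `c + (L + 2) ∑ xᵢ/i` with `L + 2 = 1`; the constant `5` exceeds the bound `4` on
the contested part of the walk by the largest wager. -/
def sepMartingale (σ : List Bool) : ℝ :=
  5 + prefixSum (fun τ b => outcome b / (τ.length + 1)) σ

lemma sepMartingale_concat (σ : List Bool) (b : Bool) :
    sepMartingale (σ ++ [b]) = sepMartingale σ + outcome b / (σ.length + 1) := by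
  simp only [sepMartingale, prefixSum_concat]
  ring

lemma inc_sepMartingale (σ : List Bool) : inc sepMartingale σ = 1 / (σ.length + 1) := by
  simp only [inc, sepMartingale_concat, outcome, if_true, Bool.false_eq_true, if_false]
  ring

lemma isMartingale_sepMartingale : IsMartingale sepMartingale := by
  intro σ
  simp only [sepMartingale_concat, outcome, if_true, Bool.false_eq_true, if_false]
  ring

lemma historyIndependent_sepMartingale : HistoryIndependent sepMartingale := by
  intro σ τ h
  rw [inc_sepMartingale, inc_sepMartingale, h]

lemma not_bankruptOn_sepMartingale {x : ℕ → Bool} (h : ∀ n, 1 ≤ sepMartingale (pre x n)) :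
    ¬ BankruptOn sepMartingale x := by
  rintro ⟨n, hn⟩
  have hmarg : marginal sepMartingale (pre x n) = 0 := by
    simp only [marginal]
    linarith [isMartingale_sepMartingale (pre x n)]
  have hinc : |inc sepMartingale (pre x n)| ≤ 1 := by
    rw [inc_sepMartingale, abs_of_pos (by positivity), div_le_one (by positivity)]
    simp
  unfold Bankrupts at hn
  linarith [h n]

def freeGain (c : List Bool → Prop) (x : ℕ → Bool) (n : ℕ) : ℝ :=
  ∑ k ∈ range n, if c (pre x k) then 0 else 1 / ((k : ℝ) + 1)

lemma monotone_freeGain (c : List Bool → Prop) (x : ℕ → Bool) : Monotone (freeGain c x) :=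
  fun _ _ hab => sum_le_sum_of_subset_of_nonneg (range_subset_range.mpr hab)
    fun _ _ _ => by split_ifs <;> positivity

lemma harmonic_sub_le_freeGain (c : List Bool → Prop) (x : ℕ → Bool) (n : ℕ) :
    ∑ k ∈ range n, 1 / ((k : ℝ) + 1) - ∑ k ∈ range n, (if c (pre x k) then 1 else 0) ≤
      freeGain c x n := by
  rw [freeGain, ← sum_sub_distrib]
  refine sum_le_sum fun k _ => ?_
  split_ifs
  · rw [sub_nonpos, div_le_one (by positivity)]
    linarith [k.cast_nonneg (α := ℝ)]
  · rw [sub_zero]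

lemma sepMartingale_pre {c : List Bool → Prop} {x : ℕ → Bool}
    (hx : ∀ k, ¬ c (pre x k) → x k = true) (n : ℕ) :
    sepMartingale (pre x n) =
      5 + walk c (pre x n) + freeGain c x n := by
  rw [sepMartingale, walk, freeGain, prefixSum_pre, prefixSum_pre, add_assoc, ← sum_add_distrib]
  congr 1
  refine sum_congr rfl fun k _ => ?_
  simp only [length_pre]
  by_cases hc : c (pre x k)
  · simp only [if_pos hc, add_zero]
  · simp only [if_neg hc, hx k hc, outcome, if_true, zero_add]

lemma exists_lt_harmonic_ge (m : ℕ) (r : ℝ) :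
    ∃ N, m < N ∧ r ≤ ∑ k ∈ range N, 1 / ((k : ℝ) + 1) :=
  ((Real.tendsto_sum_range_one_div_nat_succ_atTop.eventually_ge_atTop r).and
    (eventually_gt_atTop m)).exists.imp fun _ h => ⟨h.2, h.1⟩

/-- Start times `mⱼ` paired with the accumulated budgets `∑_{i ≤ j} T i mᵢ`; each start time is
late enough for the harmonic series to outgrow all earlier budgets. -/
def schedule (T : ℕ → ℕ → ℝ) : ℕ → ℕ × ℝ
  | 0 => (0, T 0 0)
  | j + 1 =>
    let N := (exists_lt_harmonic_ge (schedule T j).1 ((schedule T j).2 + j)).choose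
    (N, (schedule T j).2 + T (j + 1) N)

section Schedule

variable (T : ℕ → ℕ → ℝ)

lemma schedule_snd (j : ℕ) :
    (schedule T j).2 = ∑ i ∈ range (j + 1), T i (schedule T i).1 := by
  induction j with
  | zero => simp [schedule]
  | succ j ih => rw [sum_range_succ, ← ih]; rfl

lemma strictMono_schedule_fst : StrictMono fun j => (schedule T j).1 :=
  strictMono_nat_of_lt_succ fun j =>
    (exists_lt_harmonic_ge (schedule T j).1 ((schedule T j).2 + j)).choose_spec.1

lemma schedule_snd_add_le (j : ℕ) :
    (schedule T j).2 + j ≤ ∑ k ∈ range (schedule T (j + 1)).1, 1 / ((k : ℝ) + 1) :=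
  (exists_lt_harmonic_ge (schedule T j).1 ((schedule T j).2 + j)).choose_spec.2

end Schedule

def weight (j : ℕ) : ℝ := (1 / 2) ^ (j + 3)

lemma weight_pos (j : ℕ) : 0 < weight j := by
  unfold weight
  positivity

lemma summable_weight : Summable weight := by
  unfold weight
  simp_rw [pow_add]
  exact summable_geometric_two.mul_right _

lemma tsum_weight : ∑' j, weight j = 1 / 4 := by
  simp_rw [weight, pow_add, tsum_mul_right, tsum_geometric_two]
  norm_num

section Separation

variable (S : ℕ → List Bool → ℝ)

def scale (j m : ℕ) : ℝ := 2 ^ m * (S j [] + 1)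

/-- `cap` and `budget` are chosen so that each of the two parts of `betPotential` is at most
`weight j / 2` at the start time `m`. -/
def cap (j m : ℕ) : ℝ := 2 * scale S j m / weight j

def budget (j m : ℕ) : ℝ := 8 * cap S j m * scale S j m / weight j

def start (j : ℕ) : ℕ := (schedule (budget S) j).1

def contested (σ : List Bool) : Prop := ∃ j, start S j ≤ σ.length ∧ inc (S j) σ ≠ 0

def potentialTerm (j : ℕ) (σ : List Bool) : ℝ :=
  if σ.length < start S j then weight j
  else betPotential (S j) (start S j) (cap S j (start S j)) (budget S j (start S j)) σ

def potential (σ : List Bool) : ℝ :=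
  walkEnergy (contested S) σ / 16 + ∑' j, potentialTerm S j σ

def WithinCaps (σ : List Bool) : Prop := ∀ j, S j σ ≤ cap S j (start S j)

variable {S}

lemma le_start (j : ℕ) : j ≤ start S j := (strictMono_schedule_fst _).id_le j

lemma start_lt_start {i j : ℕ} : start S i < start S j ↔ i < j :=
  (strictMono_schedule_fst _).lt_iff_lt

lemma scale_pos (hpos : ∀ j σ, 0 ≤ S j σ) (j m : ℕ) : 0 < scale S j m :=
  mul_pos (pow_pos two_pos m) (by linarith [hpos j []])

lemma cap_pos (hpos : ∀ j σ, 0 ≤ S j σ) (j m : ℕ) : 0 < cap S j m :=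
  div_pos (mul_pos two_pos (scale_pos hpos j m)) (weight_pos j)

lemma budget_pos (hpos : ∀ j σ, 0 ≤ S j σ) (j m : ℕ) : 0 < budget S j m := by
  have := cap_pos hpos j m
  have := scale_pos hpos j m
  have := weight_pos j
  unfold budget
  positivity

lemma scale_le_cap (hpos : ∀ j σ, 0 ≤ S j σ) (j m : ℕ) : scale S j m ≤ cap S j m := by
  have hw : weight j ≤ 1 := pow_le_one₀ (by norm_num) (by norm_num)
  have := scale_pos hpos j m
  rw [cap, le_div_iff₀ (weight_pos j)]
  nlinarith

lemma apply_le_scale (hS : ∀ j, IsSupermartingale (S j)) (hpos : ∀ j σ, 0 ≤ S j σ)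
    {j m : ℕ} {σ : List Bool} (h : σ.length ≤ m) : S j σ ≤ scale S j m :=
  calc S j σ ≤ 2 ^ σ.length * S j [] := IsSupermartingale.le_two_pow_mul (hS j) (hpos j) σ
    _ ≤ 2 ^ m * (S j [] + 1) := by
      gcongr
      · linarith [hpos j []]
      · norm_num
      · linarith

lemma potentialTerm_of_start_le {j : ℕ} {σ : List Bool} (h : start S j ≤ σ.length) :
    potentialTerm S j σ =
      betPotential (S j) (start S j) (cap S j (start S j)) (budget S j (start S j)) σ :=
  if_neg (not_lt.mpr h)

lemma potentialTerm_le_weight (hS : ∀ j, IsSupermartingale (S j)) (hpos : ∀ j σ, 0 ≤ S j σ)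
    {j : ℕ} {σ : List Bool} (h : σ.length ≤ start S j) : potentialTerm S j σ ≤ weight j := by
  rcases h.lt_or_eq with h | h
  · exact (if_pos h).le
  rw [potentialTerm_of_start_le h.ge, betPotential, betCount_of_length_le h.le, zero_add]
  set m := start S j
  have hS0 := hpos j σ
  have hSd : S j σ ≤ scale S j m := apply_le_scale hS hpos h.le
  have hc := cap_pos hpos j m
  have hT := budget_pos hpos j m
  have hd := scale_pos hpos j m
  have hw := weight_pos j
  have h1 : S j σ / cap S j m ≤ weight j / 2 := by
    rw [div_le_iff₀ hc, cap]
    field_simp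
    linarith
  have h2 : S j σ * (4 * cap S j m - S j σ) / budget S j m ≤ weight j / 2 := by
    rw [div_le_iff₀ hT, budget]
    field_simp
    nlinarith
  linarith

lemma potentialTerm_nonneg (hpos : ∀ j σ, 0 ≤ S j σ) {j : ℕ} {σ : List Bool}
    (h : S j σ ≤ 4 * cap S j (start S j)) : 0 ≤ potentialTerm S j σ := by
  unfold potentialTerm
  split_ifs
  · exact (weight_pos j).le
  · exact (div_nonneg (hpos j σ) (cap_pos hpos j _).le).trans
      (div_le_betPotential (hpos j σ) h (budget_pos hpos j _))

lemma summable_potentialTerm (σ : List Bool) : Summable fun j => potentialTerm S j σ := by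
  refine summable_weight.congr_cofinite ?_
  rw [Nat.cofinite_eq_atTop]
  filter_upwards [eventually_gt_atTop σ.length] with j hj
  exact (if_pos (hj.trans_le (le_start j))).symm

lemma nextMean_potentialTerm_le (hS : ∀ j, IsSupermartingale (S j))
    (hpos : ∀ j σ, 0 ≤ S j σ) (hV : ∀ j, WagersIn (S j) Vset) {j : ℕ} {σ : List Bool}
    (hσ : S j σ ≤ cap S j (start S j)) :
    nextMean (contested S) (potentialTerm S j) σ ≤ potentialTerm S j σ := by
  by_cases h : σ.length < start S j
  · rw [potentialTerm, if_pos h]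
    exact nextMean_le_of_forall_le fun b => potentialTerm_le_weight hS hpos (by simpa using h)
  · replace h := not_lt.mp h
    have hchild : ∀ b, potentialTerm S j (σ ++ [b]) = betPotential (S j) (start S j)
        (cap S j (start S j)) (budget S j (start S j)) (σ ++ [b]) :=
      fun b => potentialTerm_of_start_le (by rw [List.length_append]; omega)
    rw [potentialTerm_of_start_le h]
    refine (nextMean_mono fun b => (hchild b).le).trans ?_
    refine nextMean_betPotential_le (hS j) (one_le_abs_inc_of_wagersIn (hV j)) h
      (by linarith [cap_pos hpos j (start S j)]) (cap_pos hpos j _) (budget_pos hpos j _)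
      fun hc => by_contra fun hne => hc ⟨j, h, hne⟩

lemma nextMean_potential_le (hS : ∀ j, IsSupermartingale (S j)) (hpos : ∀ j σ, 0 ≤ S j σ)
    (hV : ∀ j, WagersIn (S j) Vset) {σ : List Bool} (hσ : WithinCaps S σ) :
    nextMean (contested S) (potential S) σ ≤ potential S σ := by
  unfold potential
  rw [nextMean_add, nextMean_div_const]
  gcongr
  · exact nextMean_walkEnergy_le
  · exact nextMean_tsum_le summable_potentialTerm
      fun j => nextMean_potentialTerm_le hS hpos hV (hσ j)

lemma potential_nil_lt_one (hS : ∀ j, IsSupermartingale (S j)) (hpos : ∀ j σ, 0 ≤ S j σ) :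
    potential S [] < 1 := by
  have : ∑' j, potentialTerm S j [] ≤ 1 / 4 := tsum_weight ▸
    Summable.tsum_le_tsum (fun j => potentialTerm_le_weight hS hpos (Nat.zero_le _))
      (summable_potentialTerm []) summable_weight
  rw [potential, walkEnergy_nil]
  linarith

lemma walkEnergy_div_le_potential {σ : List Bool} (h : ∀ j, 0 ≤ potentialTerm S j σ) :
    walkEnergy (contested S) σ / 16 ≤ potential S σ :=
  le_add_of_nonneg_right (tsum_nonneg h)

lemma potentialTerm_le_potential {σ : List Bool} (h : ∀ j, 0 ≤ potentialTerm S j σ)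
    (j : ℕ) : potentialTerm S j σ ≤ potential S σ :=
  ((summable_potentialTerm σ).le_tsum j fun i _ => h i).trans
    (le_add_of_nonneg_left (div_nonneg (walkEnergy_nonneg _ σ) (by norm_num)))

lemma exists_child_withinCaps (hS : ∀ j, IsSupermartingale (S j)) (hpos : ∀ j σ, 0 ≤ S j σ)
    (hV : ∀ j, WagersIn (S j) Vset) {σ : List Bool} (hσ : WithinCaps S σ)
    (hΦ : potential S σ < 1) :
    ∃ b, (¬ contested S σ → b = true) ∧
      (WithinCaps S (σ ++ [b]) ∧ potential S (σ ++ [b]) < 1) := by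
  obtain ⟨b, hb, hle⟩ := exists_child_le_of_nextMean_le (nextMean_potential_le hS hpos hV hσ)
  have hnonneg : ∀ j, 0 ≤ potentialTerm S j (σ ++ [b]) := fun j =>
    potentialTerm_nonneg hpos (by
      linarith [IsSupermartingale.apply_concat_le_two_mul (hS j) (hpos j) σ b, hσ j,
        cap_pos hpos j (start S j)])
  refine ⟨b, hb, fun j => ?_, hle.trans_lt hΦ⟩
  by_cases h : (σ ++ [b]).length ≤ start S j
  · exact (apply_le_scale hS hpos h).trans (scale_le_cap hpos _ _)
  · have hlt := (potentialTerm_le_potential hnonneg j).trans_lt (hle.trans_lt hΦ)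
    rw [potentialTerm_of_start_le (not_le.mp h).le] at hlt
    have := (div_le_betPotential (hpos j _) ?_ (budget_pos hpos j _)).trans_lt hlt
    · exact ((div_lt_one (cap_pos hpos j _)).mp this).le
    · linarith [IsSupermartingale.apply_concat_le_two_mul (hS j) (hpos j) σ b, hσ j,
        cap_pos hpos j (start S j)]

lemma exists_path_withinCaps (hS : ∀ j, IsSupermartingale (S j)) (hpos : ∀ j σ, 0 ≤ S j σ)
    (hV : ∀ j, WagersIn (S j) Vset) :
    ∃ x : ℕ → Bool, ∀ n, (WithinCaps S (pre x n) ∧ potential S (pre x n) < 1) ∧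
      (¬ contested S (pre x n) → x n = true) :=
  exists_path (P := fun σ => WithinCaps S σ ∧ potential S σ < 1)
    ⟨fun _ => (apply_le_scale hS hpos (Nat.zero_le _)).trans (scale_le_cap hpos _ _),
      potential_nil_lt_one hS hpos⟩
    fun _ hσ => exists_child_withinCaps hS hpos hV hσ.1 hσ.2

lemma potentialTerm_nonneg_of_withinCaps (hpos : ∀ j σ, 0 ≤ S j σ) {σ : List Bool}
    (hσ : WithinCaps S σ) (j : ℕ) : 0 ≤ potentialTerm S j σ :=
  potentialTerm_nonneg hpos (by linarith [hσ j, cap_pos hpos j (start S j)])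

lemma neg_four_lt_walk (hpos : ∀ j σ, 0 ≤ S j σ) {σ : List Bool} (hσ : WithinCaps S σ)
    (hΦ : potential S σ < 1) : -4 < walk (contested S) σ := by
  have h :=
    (walkEnergy_div_le_potential (potentialTerm_nonneg_of_withinCaps hpos hσ)).trans_lt hΦ
  have : walk (contested S) σ ^ 2 < 4 ^ 2 := by
    rw [walkEnergy] at h
    have : (0 : ℝ) ≤ 2 / (σ.length + 1) := by positivity
    linarith
  exact neg_lt_of_abs_lt (abs_lt_of_sq_lt_sq this (by norm_num))

lemma betCount_lt_budget (hpos : ∀ j σ, 0 ≤ S j σ) {σ : List Bool} (hσ : WithinCaps S σ)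
    (hΦ : potential S σ < 1) {j : ℕ} (h : start S j ≤ σ.length) :
    betCount (S j) (start S j) σ < budget S j (start S j) := by
  have hlt :=
    (potentialTerm_le_potential (potentialTerm_nonneg_of_withinCaps hpos hσ) j).trans_lt hΦ
  rw [potentialTerm_of_start_le h] at hlt
  have := (betCount_div_le_betPotential (hpos j σ)
    (by linarith [hσ j, cap_pos hpos j (start S j)]) (cap_pos hpos j _)
    (budget_pos hpos j _)).trans_lt hlt
  exact (div_lt_one (budget_pos hpos j _)).mp this

lemma sum_contested_le_sum_betCount (x : ℕ → Bool) (J : ℕ) :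
    ∑ k ∈ range (start S (J + 1)), (if contested S (pre x k) then (1 : ℝ) else 0) ≤
      ∑ j ∈ range (J + 1), betCount (S j) (start S j) (pre x (start S (J + 1))) := by
  simp only [betCount, prefixSum_pre, length_pre]
  rw [sum_comm]
  refine sum_le_sum fun k hk => ?_
  split_ifs with hc
  · obtain ⟨j, hj, hne⟩ := hc
    rw [length_pre] at hj
    have hjJ : j ∈ range (J + 1) :=
      mem_range.mpr (start_lt_start.mp (hj.trans_lt (mem_range.mp hk)))
    refine le_trans ?_ (single_le_sum (fun i _ => ?_) hjJ)
    · simp [hj, hne]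
    · split_ifs <;> norm_num
  · exact sum_nonneg fun i _ => by split_ifs <;> norm_num

lemma le_freeGain_start (hpos : ∀ j σ, 0 ≤ S j σ) {x : ℕ → Bool}
    (hx : ∀ n, WithinCaps S (pre x n) ∧ potential S (pre x n) < 1) (J : ℕ) :
    (J : ℝ) ≤ freeGain (contested S) x (start S (J + 1)) := by
  have hbudget : ∑ j ∈ range (J + 1), betCount (S j) (start S j) (pre x (start S (J + 1))) ≤
      (schedule (budget S) J).2 := by
    rw [schedule_snd]
    refine sum_le_sum fun j hj => (betCount_lt_budget hpos (hx _).1 (hx _).2 ?_).le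
    rw [length_pre]
    exact (strictMono_schedule_fst _).monotone (mem_range.mp hj).le
  have hharmonic : (schedule (budget S) J).2 + J ≤
      ∑ k ∈ range (start S (J + 1)), 1 / ((k : ℝ) + 1) :=
    schedule_snd_add_le (budget S) J
  linarith [sum_contested_le_sum_betCount (S := S) x J,
    harmonic_sub_le_freeGain (contested S) x (start S (J + 1))]

lemma achievesGains_sepMartingale (hpos : ∀ j σ, 0 ≤ S j σ) {x : ℕ → Bool}
    (hx : ∀ n, WithinCaps S (pre x n) ∧ potential S (pre x n) < 1)
    (hxt : ∀ n, ¬ contested S (pre x n) → x n = true) : AchievesGains sepMartingale x := by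
  have hM : ∀ n, 1 + freeGain (contested S) x n ≤ sepMartingale (pre x n) := fun n => by
    rw [sepMartingale_pre hxt n]
    linarith [neg_four_lt_walk hpos (hx n).1 (hx n).2]
  have hfree : Tendsto (freeGain (contested S) x) atTop atTop :=
    tendsto_atTop_atTop_of_monotone (monotone_freeGain _ x) fun b =>
      ⟨_, (Nat.le_ceil b).trans (le_freeGain_start hpos hx _)⟩
  refine ⟨not_bankruptOn_sepMartingale fun n => ?_,
    tendsto_atTop_mono (fun n => by linarith [hM n]) hfree⟩
  linarith [hM n, monotone_freeGain (contested S) x (Nat.zero_le n),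
    show freeGain (contested S) x 0 = 0 from sum_range_zero _]

end Separation

end HarmonicSeparation

/-- ({1/n}, ∞-gains) anti-implies (V, ∞-gains): there is a history-independent martingale
with wagers of the form 1/n that defeats any countable set of nonnegative
V-supermartingales — on some sequence x it tends to infinity without bankruptcy while each
V-supermartingale stays bounded (finite limsup). -/
theorem stmt13 : ∃ M : List Bool → ℝ,
    IsMartingale M ∧ HistoryIndependent M ∧
    (∀ σ, ∃ n : ℕ, inc M σ = 1 / ((n : ℝ) + 1)) ∧
    ∀ S : ℕ → (List Bool → ℝ),
      (∀ j, IsSupermartingale (S j)) →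
      (∀ j σ, 0 ≤ S j σ) →
      (∀ j, WagersIn (S j) Vset) →
      ∃ x : ℕ → Bool, AchievesGains M x ∧
        ∀ j, ∃ C : ℝ, ∀ n, S j (pre x n) ≤ C := by
  open HarmonicSeparation in
  refine ⟨sepMartingale, isMartingale_sepMartingale, historyIndependent_sepMartingale,
    fun σ => ⟨σ.length, inc_sepMartingale σ⟩, fun S hS hpos hV => ?_⟩
  obtain ⟨x, hx⟩ := exists_path_withinCaps hS hpos hV
  exact ⟨x, achievesGains_sepMartingale hpos (fun n => (hx n).1) (fun n => (hx n).2),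
    fun j => ⟨cap S j (start S j), fun n => (hx n).1.1 j⟩⟩
end
end

section
/- Let S be a V-martingale (increments of absolute value at least 1, or 0) and x a binary sequence on which S does not go bankrupt. If for every natural number k the sequence min(k, ⌊S(x↾n)⌋) is eventually constant in n, then S does not oscillate on x: liminf_n S(x↾n) = limsup_n S(x↾n) or both are infinite in the same way; in particular S does not achieve oscillation on x. -/
open Filter

noncomputable section

open Topology

/-! The hypothesis on the truncations leaves two cases: `⌊S(x↾n)⌋ → +∞`, or some truncation
`min k ⌊S(x↾n)⌋` is below `k` infinitely often, and then `⌊S(x↾n)⌋` itself is eventually constant.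
In the second case the capital eventually stays in some `[m, m + 1)`, which a nonzero wager of size
at least `1` would leave, so the capital is eventually constant. Either way `S(x↾n)` converges in
`EReal`, and a martingale is its own cover. -/

theorem Filter.tendsto_atTop_or_eventuallyConst_of_eventuallyConst_min {α β : Type*}
    [LinearOrder β] {l : Filter α} {u : α → β}
    (h : ∀ k, EventuallyConst (fun a => min k (u a)) l) :
    Tendsto u l atTop ∨ EventuallyConst u l := by
  by_cases hbig : ∀ k, ∀ᶠ a in l, k ≤ u a
  · exact .inl (tendsto_atTop.2 hbig)
  simp only [not_forall, not_eventually, not_le] at hbig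
  obtain ⟨k, hk⟩ := hbig
  have : Nonempty β := ⟨k⟩
  obtain ⟨c, hc⟩ := (h k).eventuallyEq_const
  obtain ⟨a, hua, hca⟩ := (hk.and_eventually hc).exists
  have hck : c < k := (show min k (u a) = c from hca) ▸ min_lt_iff.2 (.inr hua)
  refine .inr (eventuallyConst_iff_exists_eventuallyEq.2 ⟨c, hc.mono fun a ha => ?_⟩)
  exact ((min_eq_iff.1 ha).resolve_left fun h => hck.ne' h.1).1

theorem neg_mem_Vset {a : ℝ} (ha : a ∈ Vset) : -a ∈ Vset := by
  rcases ha with ha | ha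
  · exact .inl (by simpa [abs_neg] using ha)
  · exact .inr (by simpa using ha)

theorem eq_of_floor_eq_of_sub_mem_Vset {a b : ℝ} (hfloor : ⌊a⌋ = ⌊b⌋) (hab : a - b ∈ Vset) :
    a = b := by
  rcases hab with hab | hab
  · exact absurd (Int.abs_sub_lt_one_of_floor_eq_floor hfloor) (not_lt.2 hab)
  · exact sub_eq_zero.1 hab

theorem eventuallyConst_of_eventuallyConst_floor {f : ℕ → ℝ} (hstep : ∀ n, f (n + 1) - f n ∈ Vset)
    (hfloor : EventuallyConst (fun n => ⌊f n⌋) atTop) : EventuallyConst f atTop := by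
  obtain ⟨N, hN⟩ := eventuallyConst_atTop_nat.1 hfloor
  exact eventuallyConst_atTop_nat.2
    ⟨N, fun n hn => eq_of_floor_eq_of_sub_mem_Vset (hN n hn) (hstep n)⟩

theorem exists_tendsto_coe_of_eventuallyConst_min_floor {f : ℕ → ℝ}
    (hstep : ∀ n, f (n + 1) - f n ∈ Vset)
    (hmin : ∀ k : ℤ, EventuallyConst (fun n => min k ⌊f n⌋) atTop) :
    ∃ a : EReal, Tendsto (fun n => (f n : EReal)) atTop (𝓝 a) := by
  rcases tendsto_atTop_or_eventuallyConst_of_eventuallyConst_min hmin with htop | hconst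
  · have hf : Tendsto f atTop atTop :=
      tendsto_atTop_mono (fun n => Int.floor_le (f n)) (tendsto_intCast_atTop_iff.2 htop)
    exact ⟨⊤, EReal.tendsto_coe_atTop.comp hf⟩
  · obtain ⟨c, hc⟩ := (eventuallyConst_of_eventuallyConst_floor hstep hconst).eventuallyEq_const
    exact ⟨c, tendsto_const_nhds.congr' (hc.mono fun n hn => by simp only [hn])⟩

theorem pre_succ (x : ℕ → Bool) (n : ℕ) : pre x (n + 1) = pre x n ++ [x n] := by
  simp [pre, List.range_succ]

namespace IsMartingale

variable {S : List Bool → ℝ}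

theorem apply_append_singleton (hS : IsMartingale S) (σ : List Bool) (b : Bool) :
    S (σ ++ [b]) = S σ + (if b then inc S σ else -inc S σ) := by
  have h := hS σ
  cases b <;> simp only [inc, Bool.false_eq_true, if_true, if_false] <;> linarith

theorem cover_eq (hS : IsMartingale S) (σ : List Bool) : cover S σ = S σ := by
  induction σ using List.reverseRecOn with
  | nil => simp [cover]
  | append_singleton σ b ih =>
    have hprefix : ∀ k ∈ Finset.range σ.length,
        (if (σ ++ [b]).getD k false then inc S ((σ ++ [b]).take k)
          else -inc S ((σ ++ [b]).take k))
        = (if σ.getD k false then inc S (σ.take k) else -inc S (σ.take k)) := by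
      intro k hk
      rw [Finset.mem_range] at hk
      rw [List.getD_append _ _ _ _ hk, List.take_append_of_le_length hk.le]
    have hlast : (σ ++ [b]).getD σ.length false = b := by simp
    have hcover : cover S (σ ++ [b]) = cover S σ + (if b then inc S σ else -inc S σ) := by
      simp only [cover, List.length_append, List.length_singleton, Finset.sum_range_succ,
        Finset.sum_congr rfl hprefix, hlast, List.take_left]
      ring
    rw [hcover, ih, hS.apply_append_singleton]

theorem sub_mem_of_wagersIn {A : Set ℝ} (hS : IsMartingale S) (hA : WagersIn S A)
    (hneg : ∀ a ∈ A, -a ∈ A) (x : ℕ → Bool) (n : ℕ) :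
    S (pre x (n + 1)) - S (pre x n) ∈ A := by
  rw [pre_succ, hS.apply_append_singleton]
  cases x n
  · simpa using hneg _ (hA _)
  · simpa using hA _

end IsMartingale

theorem stmt16_general (S : List Bool → ℝ) (x : ℕ → Bool)
    (hS : IsMartingale S) (hV : WagersIn S Vset)
    (hstab : ∀ k : ℤ, ∃ N, ∀ n ≥ N, min k ⌊S (pre x n)⌋ = min k ⌊S (pre x N)⌋) :
    (liminf (fun n => ((S (pre x n) : ℝ) : EReal)) atTop
      = limsup (fun n => ((S (pre x n) : ℝ) : EReal)) atTop) ∧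
    ¬ AchievesOscillation S x := by
  have hmin (k : ℤ) : EventuallyConst (fun n => min k ⌊S (pre x n)⌋) atTop :=
    eventuallyConst_atTop.2 (hstab k)
  obtain ⟨a, ha⟩ := exists_tendsto_coe_of_eventuallyConst_min_floor
    (hS.sub_mem_of_wagersIn hV (fun _ => neg_mem_Vset) x) hmin
  have hlim := ha.liminf_eq.trans ha.limsup_eq.symm
  refine ⟨hlim, fun hosc => hosc.2 ?_⟩
  simpa only [hS.cover_eq] using hlim

/-- If S is a V-martingale not going bankrupt on x, and for every k the sequence
min(k, ⌊S(x↾n)⌋) is eventually constant in n, then S does not oscillate on x. -/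
theorem stmt16 (S : List Bool → ℝ) (x : ℕ → Bool)
    (hS : IsMartingale S) (hV : WagersIn S Vset)
    (hnb : ¬ BankruptOn S x)
    (hstab : ∀ k : ℤ, ∃ N, ∀ n ≥ N, min k ⌊S (pre x n)⌋ = min k ⌊S (pre x N)⌋) :
    (liminf (fun n => ((S (pre x n) : ℝ) : EReal)) atTop
      = limsup (fun n => ((S (pre x n) : ℝ) : EReal)) atTop) ∧
    ¬ AchievesOscillation S x :=
  stmt16_general S x hS hV hstab
end
end
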